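/- arXiv:2110.11706 — 2 statements merged into one kernel-verified Lean document; each statement's English description precedes it below -/
import Mathlib

section
/- Let A be n×n complex, G, H positive semidefinite, and suppose X is a positive definite Hermitian solution of the DARE X = H + A*X(I + GX)⁻¹A. Then the closed-loop matrix T_X = (I + GX)⁻¹A satisfies ρ(T_X) ≤ 1 and every unimodular eigenvalue of T_X is semisimple (X is an almost stabilizing solution). If moreover H is positive definite, then ρ(T_X) < 1 (X is a stabilizing solution). -/
/-!
With `S = 1 + G X` and `T = S⁻¹ A`, the Riccati equation rewrites as the Stein identity
`X - Tᴴ X T = H + (X T)ᴴ G (X T)`, whose right-hand side is positive semidefinite, and positive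
definite when `H` is. For an eigenvector `T v = μ v` the Stein form gives
`vᴴ (X - Tᴴ X T) v = (1 - |μ|²) vᴴ X v` with `vᴴ X v > 0`, which bounds `|μ|`. If `|μ| = 1` and
`w = (T - μ) v` is an eigenvector, then `w` is isotropic for the semidefinite Stein form, hence in
its kernel, and pairing with `v` yields `μ wᴴ X w = 0`, so `w = 0`.
-/

open Matrix ComplexOrder

namespace Matrix

variable {ι : Type*} [Fintype ι]

theorem exists_mulVec_eq_smul_of_mem_spectrum [DecidableEq ι] {K : Type*} [Field K]
    {T : Matrix ι ι K} {μ : K} (hμ : μ ∈ spectrum K T) : ∃ v ≠ 0, T *ᵥ v = μ • v := by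
  rw [← spectrum_toLin', ← Module.End.hasEigenvalue_iff_mem_spectrum] at hμ
  obtain ⟨v, hv⟩ := hμ.exists_hasEigenvector
  exact ⟨v, hv.2, by simpa using Module.End.mem_eigenspace_iff.mp hv.1⟩

theorem dotProduct_sub_conjTranspose_mul_mul_mulVec {R : Type*} [CommRing R] [StarRing R]
    (T X : Matrix ι ι R) (u w : ι → R) :
    star u ⬝ᵥ ((X - Tᴴ * X * T) *ᵥ w)
      = star u ⬝ᵥ (X *ᵥ w) - star (T *ᵥ u) ⬝ᵥ (X *ᵥ (T *ᵥ w)) := by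
  rw [sub_mulVec, dotProduct_sub, star_mulVec, ← mulVec_mulVec, ← mulVec_mulVec,
    dotProduct_mulVec (star u) Tᴴ]

section Stein

variable {𝕜 : Type*} [RCLike 𝕜] {T X : Matrix ι ι 𝕜} {μ : 𝕜}

theorem dotProduct_sub_conjTranspose_mul_mul_mulVec_of_eigenvector {v : ι → 𝕜}
    (hv : T *ᵥ v = μ • v) :
    star v ⬝ᵥ ((X - Tᴴ * X * T) *ᵥ v) = ((1 - ‖μ‖ ^ 2 : ℝ) : 𝕜) * (star v ⬝ᵥ (X *ᵥ v)) := by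
  rw [dotProduct_sub_conjTranspose_mul_mul_mulVec, hv, star_smul, mulVec_smul, smul_dotProduct,
    dotProduct_smul, smul_eq_mul, smul_eq_mul, ← mul_assoc, RCLike.star_def, RCLike.conj_mul]
  push_cast
  ring

variable [DecidableEq ι] (hX : X.PosDef)
include hX

theorem norm_le_one_of_mem_spectrum_of_posSemidef_stein (hY : (X - Tᴴ * X * T).PosSemidef)
    (hμ : μ ∈ spectrum 𝕜 T) : ‖μ‖ ≤ 1 := by
  obtain ⟨v, hv0, hv⟩ := exists_mulVec_eq_smul_of_mem_spectrum hμ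
  have h := hY.re_dotProduct_nonneg v
  rw [dotProduct_sub_conjTranspose_mul_mul_mulVec_of_eigenvector hv, RCLike.re_ofReal_mul] at h
  have := nonneg_of_mul_nonneg_left h (hX.re_dotProduct_pos hv0)
  nlinarith [norm_nonneg μ]

theorem norm_lt_one_of_mem_spectrum_of_posDef_stein (hY : (X - Tᴴ * X * T).PosDef)
    (hμ : μ ∈ spectrum 𝕜 T) : ‖μ‖ < 1 := by
  obtain ⟨v, hv0, hv⟩ := exists_mulVec_eq_smul_of_mem_spectrum hμ
  have h := hY.re_dotProduct_pos hv0
  rw [dotProduct_sub_conjTranspose_mul_mul_mulVec_of_eigenvector hv, RCLike.re_ofReal_mul] at h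
  have := pos_of_mul_pos_left h (hX.re_dotProduct_pos hv0).le
  nlinarith [norm_nonneg μ]

theorem mulVec_sub_smul_one_eq_zero_of_stein (hY : (X - Tᴴ * X * T).PosSemidef) (hμ : ‖μ‖ = 1)
    {v : ι → 𝕜} (hv : (T - μ • 1) *ᵥ ((T - μ • 1) *ᵥ v) = 0) : (T - μ • 1) *ᵥ v = 0 := by
  set w := (T - μ • 1) *ᵥ v
  have hTw : T *ᵥ w = μ • w := by
    rwa [sub_mulVec, smul_mulVec, one_mulVec, sub_eq_zero] at hv
  have hTv : T *ᵥ v = μ • v + w := by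
    simp only [w, sub_mulVec, smul_mulVec, one_mulVec, add_sub_cancel]
  have hconj : star μ * μ = 1 := by rw [RCLike.star_def, RCLike.conj_mul, hμ]; norm_num
  have hYw : (X - Tᴴ * X * T) *ᵥ w = 0 := by
    rw [← hY.dotProduct_mulVec_zero_iff,
      dotProduct_sub_conjTranspose_mul_mul_mulVec_of_eigenvector hTw, hμ]
    simp
  have hw : μ * (star w ⬝ᵥ (X *ᵥ w)) = 0 := by
    have h := congrArg (star v ⬝ᵥ ·) hYw
    simp only [dotProduct_zero, dotProduct_sub_conjTranspose_mul_mul_mulVec, hTv, hTw,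
      star_add, star_smul, mulVec_smul, add_dotProduct, smul_dotProduct, dotProduct_smul,
      smul_eq_mul] at h
    linear_combination -h - (star v ⬝ᵥ (X *ᵥ w)) * hconj
  by_contra hw0
  have hμ0 : μ ≠ 0 := by rintro rfl; simp at hμ
  exact (hX.dotProduct_mulVec_pos hw0).ne' ((mul_eq_zero.mp hw).resolve_left hμ0)

end Stein

section Riccati

variable [DecidableEq ι]

theorem isUnit_det_one_add_mul_of_posSemidef_of_posDef {𝕜 : Type*} [RCLike 𝕜]
    {G X : Matrix ι ι 𝕜} (hG : G.PosSemidef) (hX : X.PosDef) : IsUnit (1 + G * X).det := by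
  have hdX : IsUnit X.det := hX.det_pos.ne'.isUnit
  have hfactor : 1 + G * X = (X⁻¹ + G) * X := by rw [add_mul, nonsing_inv_mul X hdX]
  rw [hfactor, det_mul]
  exact (hX.inv.add_posSemidef hG).det_pos.ne'.isUnit.mul hdX

theorem sub_conjTranspose_mul_mul_eq_of_riccati {R : Type*} [CommRing R] [StarRing R]
    {A G H X : Matrix ι ι R} (hX : X.IsHermitian) (hG : G.IsHermitian)
    (hS : IsUnit (1 + G * X).det) (heq : X = H + Aᴴ * X * (1 + G * X)⁻¹ * A) :
    X - ((1 + G * X)⁻¹ * A)ᴴ * X * ((1 + G * X)⁻¹ * A)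
      = H + (X * ((1 + G * X)⁻¹ * A))ᴴ * G * (X * ((1 + G * X)⁻¹ * A)) := by
  set S := 1 + G * X
  have hSX : Sᴴ * X = X * S := by
    simp only [S, conjTranspose_add, conjTranspose_one, conjTranspose_mul, hX.eq, hG.eq]
    noncomm_ring
  have hSinv : (S⁻¹)ᴴ * X = X * S⁻¹ := by
    calc (S⁻¹)ᴴ * X = (S⁻¹)ᴴ * (X * S) * S⁻¹ := by
          rw [Matrix.mul_assoc, Matrix.mul_assoc, mul_nonsing_inv S hS, Matrix.mul_one]
      _ = (S * S⁻¹)ᴴ * X * S⁻¹ := by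
          rw [← hSX, conjTranspose_mul]; noncomm_ring
      _ = X * S⁻¹ := by rw [mul_nonsing_inv S hS, conjTranspose_one, Matrix.one_mul]
  have hXS : X + X * G * X = X * S := by simp only [S]; noncomm_ring
  have hquad : (S⁻¹ * A)ᴴ * X * (S⁻¹ * A) + (X * (S⁻¹ * A))ᴴ * G * (X * (S⁻¹ * A))
      = Aᴴ * X * S⁻¹ * A := by
    calc _ = Aᴴ * (S⁻¹)ᴴ * (X + X * G * X) * S⁻¹ * A := by
          simp only [conjTranspose_mul, hX.eq]; noncomm_ring
      _ = Aᴴ * ((S⁻¹)ᴴ * X) * (S * S⁻¹) * A := by rw [hXS]; noncomm_ring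
      _ = Aᴴ * X * S⁻¹ * A := by
          rw [hSinv, mul_nonsing_inv S hS, Matrix.mul_one]
          simp only [Matrix.mul_assoc]
  rw [← hquad] at heq
  nth_rewrite 1 [heq]
  abel

end Riccati

end Matrix

theorem stmt_15 (n : ℕ) (A G H X : Matrix (Fin n) (Fin n) ℂ)
    (hG : G.PosSemidef) (hH : H.PosSemidef)
    (hX : X.PosDef)
    (heq : X = H + Aᴴ * X * (1 + G * X)⁻¹ * A) :
    (∀ μ ∈ spectrum ℂ ((1 + G * X)⁻¹ * A), ‖μ‖ ≤ 1) ∧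
    (∀ μ ∈ spectrum ℂ ((1 + G * X)⁻¹ * A), ‖μ‖ = 1 →
      ∀ v : Fin n → ℂ,
        ((1 + G * X)⁻¹ * A - μ • 1) *ᵥ (((1 + G * X)⁻¹ * A - μ • 1) *ᵥ v) = 0 →
        ((1 + G * X)⁻¹ * A - μ • 1) *ᵥ v = 0) ∧
    (H.PosDef → ∀ μ ∈ spectrum ℂ ((1 + G * X)⁻¹ * A), ‖μ‖ < 1) := by
  have hstein := sub_conjTranspose_mul_mul_eq_of_riccati hX.isHermitian hG.isHermitian
    (isUnit_det_one_add_mul_of_posSemidef_of_posDef hG hX) heq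
  have hGT := hG.conjTranspose_mul_mul_same (X * ((1 + G * X)⁻¹ * A))
  have hY : (X - ((1 + G * X)⁻¹ * A)ᴴ * X * ((1 + G * X)⁻¹ * A)).PosSemidef := by
    rw [hstein]; exact hH.add hGT
  refine ⟨fun μ hμ ↦ norm_le_one_of_mem_spectrum_of_posSemidef_stein hX hY hμ,
    fun μ _ hμ v hv ↦ mulVec_sub_smul_one_eq_zero_of_stein hX hY hμ hv,
    fun hH' μ hμ ↦ norm_lt_one_of_mem_spectrum_of_posDef_stein hX ?_ hμ⟩
  rw [hstein]
  exact hH'.add_posSemidef hGT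
end

section
/- Let R_d(X) = H + A*X(I + GX)⁻¹A with A ∈ C^{n×n}, G, H ≥ 0, and suppose there exists Ŷ ≥ 0 with Ŷ ≥ R_d(Ŷ). Then the iteration X₁ = H (more generally any X₁ with 0 ≤ X₁ ≤ H), X_{k+1} = R_d(X_k), produces a monotonically nondecreasing sequence bounded above by Ŷ, which converges to the minimal positive semidefinite solution X⋆ of the DARE: X⋆ = R_d(X⋆) and X⋆ ≤ S for every positive semidefinite solution S. -/
/-!
Write `F_G(X) = X (1 + G X)⁻¹`. For `G, X ⪰ 0` and `W = (1 + G X)⁻¹` one has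
`F_G(X) = Wᴴ (X + X G X) W ⪰ 0`, and for `X ≤ Y` the difference is again a congruence,
`F_G(Y) - F_G(X) = Wᴴ F_T(Y - X) W` with `T = (1 + G X)⁻¹ G ⪰ 0`. So `F_G`, and with it `R_d`,
is monotone in the Loewner order on positive semidefinite matrices. The iterates then increase,
since `X₁ ≤ H ≤ R_d(X₁)`, and stay below every `S ⪰ 0` with `R_d(S) ≤ S`, since `X₁ ≤ H ≤ R_d(S)`;
both `Ŷ` and every positive semidefinite solution are such an `S`. A monotone bounded sequence of
matrices converges, because its quadratic forms do and polarization recovers the entries, and the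
limit is a fixed point of `R_d` by continuity.
-/

open Matrix ComplexOrder Filter Topology
open scoped MatrixOrder

section Iterate

variable {α : Type*} [Preorder α] {f : α → α} {s : Set α}

theorem MonotoneOn.monotone_iterate_of_le_map (hf : MonotoneOn f s) (hs : Set.MapsTo f s s)
    {x : α} (hx : x ∈ s) (hxf : x ≤ f x) : Monotone fun n => f^[n] x := by
  refine monotone_nat_of_le_succ fun n => ?_
  induction n with
  | zero => exact hxf
  | succ n ih =>
    have h := hf (hs.iterate n hx) (hs.iterate (n + 1) hx) ih
    rwa [← Function.iterate_succ_apply' f n, ← Function.iterate_succ_apply' f (n + 1)] at h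

theorem MonotoneOn.iterate_le_of_map_le (hf : MonotoneOn f s) (hs : Set.MapsTo f s s) {x y : α}
    (hx : x ∈ s) (hy : y ∈ s) (hxy : x ≤ y) (hfy : f y ≤ y) (n : ℕ) : f^[n] x ≤ y := by
  induction n with
  | zero => exact hxy
  | succ n ih =>
    rw [Function.iterate_succ_apply']
    exact (hf (hs.iterate n hx) hy ih).trans hfy

end Iterate

theorem Complex.exists_tendsto_of_monotone_of_le {z : ℕ → ℂ} (hz : Monotone z) {w : ℂ}
    (hw : ∀ k, z k ≤ w) : ∃ l, Tendsto z atTop (𝓝 l) := by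
  have hre : Monotone fun k => (z k).re := fun a b hab => (Complex.le_def.1 (hz hab)).1
  have him : ∀ k, (z k).im = (z 0).im := fun k => (Complex.le_def.1 (hz k.zero_le)).2.symm
  have hbdd : BddAbove (Set.range fun k => (z k).re) :=
    ⟨w.re, Set.forall_mem_range.2 fun k => (Complex.le_def.1 (hw k)).1⟩
  refine ⟨↑(⨆ k, (z k).re) + ↑(z 0).im * Complex.I, ?_⟩
  have hlim := (Complex.continuous_ofReal.tendsto _).comp (tendsto_atTop_ciSup hre hbdd)
  convert hlim.add_const (↑(z 0).im * Complex.I) using 1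
  funext k
  simp only [Function.comp_apply, ← him k, Complex.re_add_im]

namespace Matrix

variable {𝕜 m : Type*} [RCLike 𝕜] [Fintype m]

theorem isClosed_setOf_posSemidef : IsClosed {M : Matrix m m 𝕜 | M.PosSemidef} := by
  simp only [posSemidef_iff_dotProduct_mulVec, Set.ofPred_and, Set.ofPred_forall]
  exact (isClosed_eq continuous_id.matrix_conjTranspose continuous_id).inter <|
    isClosed_iInter fun x => isClosed_le continuous_const <|
      continuous_const.dotProduct (continuous_id.matrix_mulVec continuous_const)

instance : OrderClosedTopology (Matrix m m 𝕜) where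
  isClosed_le' := isClosed_setOf_posSemidef.preimage (continuous_snd.sub continuous_fst)

theorem dotProduct_mulVec_mono (v : m → 𝕜) : Monotone fun M : Matrix m m 𝕜 => star v ⬝ᵥ (M *ᵥ v) :=
  fun M N (h : M ≤ N) => sub_nonneg.1 <| by
    simpa only [sub_mulVec, dotProduct_sub] using (le_iff.mp h).dotProduct_mulVec_nonneg v

theorem dotProduct_mulVec_polarization (M : Matrix m m ℂ) (x y : m → ℂ) :
    star x ⬝ᵥ (M *ᵥ y) =
      (star (x + y) ⬝ᵥ (M *ᵥ (x + y)) - star (x - y) ⬝ᵥ (M *ᵥ (x - y))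
        - Complex.I * (star (x + Complex.I • y) ⬝ᵥ (M *ᵥ (x + Complex.I • y))
          - star (x - Complex.I • y) ⬝ᵥ (M *ᵥ (x - Complex.I • y)))) / 4 := by
  simp only [mulVec_add, mulVec_sub, mulVec_smul, star_add, star_sub, star_smul, dotProduct_add,
    dotProduct_sub, add_dotProduct, sub_dotProduct, dotProduct_smul, smul_dotProduct, smul_eq_mul,
    Complex.star_def, Complex.conj_I]
  ring_nf
  rw [Complex.I_sq]
  ring

variable [DecidableEq m]

theorem exists_tendsto_of_forall_tendsto_dotProduct_mulVec {f : ℕ → Matrix m m ℂ}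
    (h : ∀ v, ∃ l, Tendsto (fun k => star v ⬝ᵥ (f k *ᵥ v)) atTop (𝓝 l)) :
    ∃ L, Tendsto f atTop (𝓝 L) := by
  choose q hq using h
  have hB : ∀ x y, ∃ l, Tendsto (fun k => star x ⬝ᵥ (f k *ᵥ y)) atTop (𝓝 l) := fun x y =>
    ⟨_, ((((hq _).sub (hq _)).sub (((hq _).sub (hq _)).const_mul Complex.I)).div_const 4).congr
      fun k => (dotProduct_mulVec_polarization (f k) x y).symm⟩
  choose B hB using hB
  refine ⟨of fun i j => B (Pi.single i 1) (Pi.single j 1),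
    tendsto_pi_nhds.2 fun i => tendsto_pi_nhds.2 fun j => ?_⟩
  simpa [mulVec_single_one, Pi.star_single] using hB (Pi.single i 1) (Pi.single j 1)

theorem exists_tendsto_of_monotone_of_le {f : ℕ → Matrix m m ℂ} (hf : Monotone f)
    {Y : Matrix m m ℂ} (hY : ∀ k, f k ≤ Y) : ∃ L, Tendsto f atTop (𝓝 L) :=
  exists_tendsto_of_forall_tendsto_dotProduct_mulVec fun v =>
    Complex.exists_tendsto_of_monotone_of_le ((dotProduct_mulVec_mono v).comp hf)
      fun k => dotProduct_mulVec_mono v (hY k)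

theorem PosSemidef.isUnit_det_one_add_mul {G X : Matrix m m 𝕜} (hG : G.PosSemidef)
    (hX : X.PosSemidef) : IsUnit (1 + G * X).det := by
  set S := CFC.sqrt G
  have hS : S.PosSemidef := (CFC.sqrt_nonneg G).posSemidef
  have hSS : S * S = G := CFC.sqrt_mul_sqrt_self G hG.nonneg
  have hSXS : (S * X * S).PosSemidef := by
    simpa only [hS.1.eq] using hX.mul_mul_conjTranspose_same S
  rw [← hSS, Matrix.mul_assoc, det_one_add_mul_comm]
  exact (PosDef.one.add_posSemidef hSXS).det_pos.ne'.isUnit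

theorem conjTranspose_inv_one_add_mul {G X : Matrix m m 𝕜} (hG : G.IsHermitian)
    (hX : X.IsHermitian) : ((1 + G * X)⁻¹)ᴴ = (1 + X * G)⁻¹ := by
  rw [conjTranspose_nonsing_inv, conjTranspose_add, conjTranspose_one, conjTranspose_mul,
    hG.eq, hX.eq]

theorem PosSemidef.mul_inv_one_add_mul {G X : Matrix m m 𝕜} (hG : G.PosSemidef)
    (hX : X.PosSemidef) : (X * (1 + G * X)⁻¹).PosSemidef := by
  have hu := hG.isUnit_det_one_add_mul hX
  have hXGX : (X + X * G * X).PosSemidef := by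
    simpa only [hX.1.eq] using hX.add (hG.conjTranspose_mul_mul_same X)
  have key : X * (1 + G * X)⁻¹ = ((1 + G * X)⁻¹)ᴴ * (X + X * G * X) * (1 + G * X)⁻¹ := by
    have h : X + X * G * X = (1 + G * X)ᴴ * X := by
      rw [conjTranspose_add, conjTranspose_one, conjTranspose_mul, hG.1.eq, hX.1.eq]; noncomm_ring
    rw [h, ← Matrix.mul_assoc, ← conjTranspose_mul, mul_nonsing_inv _ hu, conjTranspose_one,
      Matrix.one_mul]
  rw [key]
  exact hXGX.conjTranspose_mul_mul_same _

theorem mul_inv_one_add_mul_sub {G X Y : Matrix m m 𝕜} (hX : IsUnit (1 + G * X).det)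
    (hX' : IsUnit (1 + X * G).det) (hY : IsUnit (1 + G * Y).det) :
    Y * (1 + G * Y)⁻¹ - X * (1 + G * X)⁻¹ = (1 + X * G)⁻¹ * (Y - X) * (1 + G * Y)⁻¹ := by
  have push : X * (1 + G * X)⁻¹ = (1 + X * G)⁻¹ * X := by
    calc X * (1 + G * X)⁻¹ = (1 + X * G)⁻¹ * ((1 + X * G) * X) * (1 + G * X)⁻¹ := by
          rw [nonsing_inv_mul_cancel_left _ _ hX']
      _ = (1 + X * G)⁻¹ * X := by
          rw [show (1 + X * G) * X = X * (1 + G * X) by noncomm_ring, ← Matrix.mul_assoc,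
            mul_nonsing_inv_cancel_right _ _ hX]
  calc Y * (1 + G * Y)⁻¹ - X * (1 + G * X)⁻¹
      = (1 + X * G)⁻¹ * ((1 + X * G) * Y) * (1 + G * Y)⁻¹
        - (1 + X * G)⁻¹ * X * (1 + G * Y) * (1 + G * Y)⁻¹ := by
        rw [nonsing_inv_mul_cancel_left _ _ hX', mul_nonsing_inv_cancel_right _ _ hY, push]
    _ = (1 + X * G)⁻¹ * ((1 + X * G) * Y - X * (1 + G * Y)) * (1 + G * Y)⁻¹ := by
        rw [Matrix.mul_sub, Matrix.sub_mul, Matrix.mul_assoc _ X]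
    _ = (1 + X * G)⁻¹ * (Y - X) * (1 + G * Y)⁻¹ := by
        congr 2
        noncomm_ring

theorem mul_inv_one_add_mul_mono {G : Matrix m m 𝕜} (hG : G.PosSemidef) :
    MonotoneOn (fun X : Matrix m m 𝕜 => X * (1 + G * X)⁻¹) (Set.Ici 0) := by
  intro X (hX : 0 ≤ X) Y _ (hXY : X ≤ Y)
  have hY : 0 ≤ Y := hX.trans hXY
  set T := (1 + G * X)⁻¹ * G
  have hT : T.PosSemidef := by
    simpa only [conjTranspose_mul, conjTranspose_inv_one_add_mul hX.posSemidef.1 hG.1, hG.1.eq]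
      using (hX.posSemidef.mul_inv_one_add_mul hG).conjTranspose
  have hfac : 1 + G * Y = (1 + G * X) * (1 + T * (Y - X)) := by
    rw [Matrix.mul_add, Matrix.mul_one, ← Matrix.mul_assoc,
      mul_nonsing_inv_cancel_left _ _ (hG.isUnit_det_one_add_mul hX.posSemidef)]
    noncomm_ring
  show (Y * (1 + G * Y)⁻¹ - X * (1 + G * X)⁻¹).PosSemidef
  rw [mul_inv_one_add_mul_sub (hG.isUnit_det_one_add_mul hX.posSemidef)
      (hX.posSemidef.isUnit_det_one_add_mul hG) (hG.isUnit_det_one_add_mul hY.posSemidef),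
    hfac, mul_inv_rev, ← conjTranspose_inv_one_add_mul hG.1 hX.posSemidef.1]
  simpa only [Matrix.mul_assoc] using
    (hT.mul_inv_one_add_mul (le_iff.mp hXY)).conjTranspose_mul_mul_same (1 + G * X)⁻¹

noncomputable def riccatiMap (A G H X : Matrix m m 𝕜) : Matrix m m 𝕜 :=
  H + Aᴴ * X * (1 + G * X)⁻¹ * A

variable (A : Matrix m m 𝕜) {G H : Matrix m m 𝕜}

theorem le_riccatiMap (hG : G.PosSemidef) {X : Matrix m m 𝕜} (hX : 0 ≤ X) :
    H ≤ riccatiMap A G H X := by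
  rw [riccatiMap, Matrix.mul_assoc Aᴴ X]
  exact le_add_of_nonneg_right <|
    star_left_conjugate_nonneg (hG.mul_inv_one_add_mul hX.posSemidef).nonneg A

theorem mapsTo_riccatiMap (hG : G.PosSemidef) (hH : 0 ≤ H) :
    Set.MapsTo (riccatiMap A G H) (Set.Ici 0) (Set.Ici 0) :=
  fun _ hX => hH.trans (le_riccatiMap A hG hX)

theorem riccatiMap_monotoneOn (hG : G.PosSemidef) :
    MonotoneOn (riccatiMap A G H) (Set.Ici 0) := by
  intro X hX Y hY hXY
  simp only [riccatiMap, Matrix.mul_assoc Aᴴ X, Matrix.mul_assoc Aᴴ Y]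
  exact add_le_add_right
    (star_left_conjugate_le_conjugate (mul_inv_one_add_mul_mono hG hX hY hXY) A) H

theorem continuousAt_riccatiMap (hG : G.PosSemidef) {X : Matrix m m 𝕜} (hX : 0 ≤ X) :
    ContinuousAt (riccatiMap A G H) X := by
  have hinv : ContinuousAt Inv.inv (1 + G * X) := by
    refine continuousAt_matrix_inv _ ?_
    rw [Ring.inverse_eq_inv']
    exact continuousAt_inv₀ (hG.isUnit_det_one_add_mul hX.posSemidef).ne_zero
  have hden : ContinuousAt (fun X : Matrix m m 𝕜 => (1 + G * X)⁻¹) X :=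
    hinv.comp (f := fun X => 1 + G * X) (by fun_prop)
  exact continuousAt_const.add
    (((continuousAt_const.mul continuousAt_id).mul hden).mul continuousAt_const)

end Matrix

theorem stmt_18 (n : ℕ) (A G H : Matrix (Fin n) (Fin n) ℂ)
    (hG : G.PosSemidef) (hH : H.PosSemidef)
    (Rd : Matrix (Fin n) (Fin n) ℂ → Matrix (Fin n) (Fin n) ℂ)
    (hRd : ∀ X, Rd X = H + Aᴴ * X * (1 + G * X)⁻¹ * A)
    (Y : Matrix (Fin n) (Fin n) ℂ) (hY : Y.PosSemidef) (hYge : (Y - Rd Y).PosSemidef)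
    (X₁ : Matrix (Fin n) (Fin n) ℂ) (hX₁ : X₁.PosSemidef) (hX₁H : (H - X₁).PosSemidef) :
    (∀ k : ℕ, (Rd^[k+1] X₁ - Rd^[k] X₁).PosSemidef) ∧
    (∀ k : ℕ, (Y - Rd^[k] X₁).PosSemidef) ∧
    ∃ Xs : Matrix (Fin n) (Fin n) ℂ,
      Filter.Tendsto (fun k => Rd^[k] X₁) Filter.atTop (nhds Xs) ∧
      Xs.PosSemidef ∧ Xs = Rd Xs ∧
      ∀ S : Matrix (Fin n) (Fin n) ℂ, S.PosSemidef → S = Rd S → (S - Xs).PosSemidef := by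
  obtain rfl : Rd = riccatiMap A G H := funext hRd
  have hmono := riccatiMap_monotoneOn A (H := H) hG
  have hmaps := mapsTo_riccatiMap A hG hH.nonneg
  have hle : ∀ S : Matrix (Fin n) (Fin n) ℂ, 0 ≤ S → riccatiMap A G H S ≤ S →
      ∀ k, (riccatiMap A G H)^[k] X₁ ≤ S := fun S hS hSfix =>
    hmono.iterate_le_of_map_le hmaps hX₁.nonneg hS
      ((le_iff.mpr hX₁H).trans ((le_riccatiMap A hG hS).trans hSfix)) hSfix
  have hinc : Monotone fun k => (riccatiMap A G H)^[k] X₁ :=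
    hmono.monotone_iterate_of_le_map hmaps hX₁.nonneg
      ((le_iff.mpr hX₁H).trans (le_riccatiMap A hG hX₁.nonneg))
  obtain ⟨L, hL⟩ := exists_tendsto_of_monotone_of_le hinc (hle Y hY.nonneg hYge)
  have hL0 : 0 ≤ L := hX₁.nonneg.trans (hinc.ge_of_tendsto hL 0)
  refine ⟨fun k => hinc k.le_succ, hle Y hY.nonneg hYge, L, hL, hL0.posSemidef,
    (isFixedPt_of_tendsto_iterate hL (continuousAt_riccatiMap A hG hL0)).symm,
    fun S hS hSfix => le_of_tendsto' hL (hle S hS.nonneg hSfix.ge)⟩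
end
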